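/- Let μ be a nonnegative measure on ℝ supported in ℝ₊, let η > 0 and m > 0 be such that μ([0, η]) ≥ m, and let s(z) = ∫ (t − z)⁻¹ dμ(t). Then for every z ∈ ℂ∖ℝ₊: | s(z) | ≥ m · dist(z, ℝ₊) / ( 4 (η² + |z|²) ). -/

import Mathlib

open MeasureTheory

noncomputable section

/-- The closed nonnegative real half-axis `ℝ₊` viewed inside `ℂ`. -/
def nonnegReal : Set ℂ := {w : ℂ | ∃ x : ℝ, 0 ≤ x ∧ w = (x : ℂ)}

/-- `δ_z`, the distance from `z` to `ℝ₊`. -/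
def deltaz (z : ℂ) : ℝ := Metric.infDist z nonnegReal

lemma nonnegReal_closed : IsClosed nonnegReal := by
  have : nonnegReal = (Complex.ofReal '' Set.Ici 0) := by
    ext w; constructor
    · rintro ⟨x, hx, rfl⟩; exact ⟨x, hx, rfl⟩
    · rintro ⟨x, hx, rfl⟩; exact ⟨x, hx, rfl⟩
  rw [this]
  exact (Complex.isometry_ofReal.isClosedEmbedding.isClosedMap _ isClosed_Ici)

/-- lower bound on a Stieltjes transform with mass `m` on `[0, η]`. -/
theorem statement19
    (μ : Measure ℝ) [IsFiniteMeasure μ] (hsupp : μ {t : ℝ | t < 0} = 0)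
    (η m : ℝ) (hη : 0 < η) (hm : 0 < m)
    (hmass : ENNReal.ofReal m ≤ μ (Set.Icc 0 η))
    (z : ℂ) (hz : z ∉ nonnegReal) :
    m * deltaz z / (4 * (η ^ 2 + ‖z‖ ^ 2)) ≤
      ‖∫ t : ℝ, ((t : ℂ) - z)⁻¹ ∂μ‖ := by
  set d := deltaz z with hd_def
  have h0mem : (0 : ℂ) ∈ nonnegReal := ⟨0, le_refl 0, by simp⟩
  have hd : 0 < d := by
    rw [hd_def, deltaz]
    exact (nonnegReal_closed.notMem_iff_infDist_pos ⟨0, h0mem⟩).mp hz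
  have hae : ∀ᵐ t ∂μ, (0:ℝ) ≤ t := by
    rw [ae_iff]
    convert hsupp using 2
    ext t; simp
  have hne : ∀ t : ℝ, 0 ≤ t → ((t:ℂ) - z) ≠ 0 := by
    intro t ht h
    exact hz ⟨t, ht, (sub_eq_zero.mp h).symm⟩
  have habs_ge : ∀ t : ℝ, 0 ≤ t → d ≤ ‖(t:ℂ) - z‖ := by
    intro t ht
    have hmem : (t:ℂ) ∈ nonnegReal := ⟨t, ht, rfl⟩
    have := Metric.infDist_le_dist_of_mem (x := z) hmem
    rw [Complex.dist_eq, ← norm_neg] at this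
    simpa [hd_def, deltaz] using this
  -- the unit vector w
  obtain ⟨w, hw1, hw2⟩ : ∃ w : ℂ, ‖w‖ = 1 ∧
      ∀ t : ℝ, 0 ≤ t → d ≤ ((starRingEnd ℂ) w * ((t:ℂ) - (starRingEnd ℂ) z)).re := by
    rcases le_or_gt z.re 0 with hx | hx
    · have hz0 : z ≠ 0 := fun h => hz (h ▸ h0mem)
      have hr : (0:ℝ) < ‖z‖ := by simpa using norm_pos_iff.mpr hz0
      refine ⟨-(starRingEnd ℂ) z / (‖z‖ : ℂ), ?_, ?_⟩
      · simp [map_div₀, Complex.norm_conj, Complex.norm_real, abs_of_pos hr,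
          div_self (ne_of_gt hr)]
      · intro t ht
        have hdz : d ≤ ‖z‖ := by
          have := Metric.infDist_le_dist_of_mem (x := z) h0mem
          simpa [Complex.dist_eq, hd_def, deltaz] using this
        have hre : ((starRingEnd ℂ) (-(starRingEnd ℂ) z / (‖z‖ : ℂ)) *
            ((t:ℂ) - (starRingEnd ℂ) z)).re
            = (-z.re * t + Complex.normSq z) / ‖z‖ := by
          simp [map_div₀, Complex.div_re, Complex.mul_re, Complex.mul_im,
            Complex.normSq_apply, Complex.sub_re, Complex.sub_im]
          field_simp
          ring
        rw [hre, le_div_iff₀ hr]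
        have h2 : 0 ≤ -z.re * t := mul_nonneg (by linarith) ht
        nlinarith [Complex.sq_norm z]
    · have hy : z.im ≠ 0 := by
        intro h
        exact hz ⟨z.re, le_of_lt hx, by exact (Complex.ext (by simp) (by simp [h])).symm⟩
      have hdy : d ≤ |z.im| := by
        have hmem : ((z.re : ℝ) : ℂ) ∈ nonnegReal := ⟨z.re, le_of_lt hx, rfl⟩
        have := Metric.infDist_le_dist_of_mem (x := z) hmem
        rw [Complex.dist_eq] at this
        refine this.trans (le_of_eq ?_)
        rw [Complex.norm_def, Complex.normSq_apply]
        simp [Real.sqrt_mul_self_eq_abs]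
      refine ⟨if 0 ≤ z.im then Complex.I else -Complex.I, ?_, ?_⟩
      · split <;> simp
      · intro t ht
        split
        · next h => 
          simp [Complex.mul_re, Complex.sub_re, Complex.sub_im]
          rw [abs_of_nonneg h] at hdy; linarith
        · next h =>
          simp [Complex.mul_re, Complex.sub_re, Complex.sub_im]
          rw [abs_of_neg (lt_of_not_ge h)] at hdy; linarith
  -- main chain
  set K := η ^ 2 + ‖z‖ ^ 2 with hK
  have hK0 : 0 < K := by positivity
  have hFm : AEStronglyMeasurable (fun t : ℝ => ((t:ℂ) - z)⁻¹) μ :=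
    ((Complex.measurable_ofReal.sub measurable_const).inv).aestronglyMeasurable
  have hFint : Integrable (fun t : ℝ => ((t:ℂ) - z)⁻¹) μ := by
    refine Integrable.mono' (integrable_const d⁻¹) hFm ?_
    filter_upwards [hae] with t ht
    rw [norm_inv]
    exact inv_anti₀ hd (habs_ge t ht)
  set g : ℝ → ℝ := fun t => ((starRingEnd ℂ) w * ((t:ℂ) - z)⁻¹).re with hg
  have hglb : ∀ t : ℝ, 0 ≤ t → d / Complex.normSq ((t:ℂ) - z) ≤ g t := by
    intro t ht
    have hns : 0 < Complex.normSq ((t:ℂ) - z) := Complex.normSq_pos.mpr (hne t ht)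
    have : g t = ((starRingEnd ℂ) w * ((t:ℂ) - (starRingEnd ℂ) z)).re
        * (Complex.normSq ((t:ℂ) - z))⁻¹ := by
      rw [hg]
      simp only [Complex.inv_def, map_sub, Complex.conj_ofReal]
      rw [← mul_assoc]
      simp [Complex.mul_re, Complex.ofReal_im, Complex.ofReal_re]
    rw [this, div_eq_mul_inv]
    exact mul_le_mul_of_nonneg_right (hw2 t ht) (le_of_lt (inv_pos.mpr hns))
  have hg0 : 0 ≤ᵐ[μ] g := by
    filter_upwards [hae] with t ht
    have hns : 0 < Complex.normSq ((t:ℂ) - z) := Complex.normSq_pos.mpr (hne t ht)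
    exact le_trans (by positivity) (hglb t ht)
  have hgint : Integrable g μ := (hFint.const_mul _).re
  have hgIcc : ∀ t ∈ Set.Icc (0:ℝ) η, d / (2 * K) ≤ g t := by
    intro t ht
    obtain ⟨ht0, htη⟩ := ht
    refine le_trans ?_ (hglb t ht0)
    have h1 : ‖(t:ℂ) - z‖ ≤ η + ‖z‖ := by
      have h1a := norm_sub_le (t:ℂ) z
      have h1b : ‖(t:ℂ)‖ = t := by
        simp [Complex.norm_real, abs_of_nonneg ht0]
      rw [h1b] at h1a
      linarith
    have h2 : Complex.normSq ((t:ℂ) - z) ≤ 2 * K := by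
      rw [← Complex.sq_norm, hK]
      have := mul_self_le_mul_self (norm_nonneg ((t:ℂ) - z)) h1
      nlinarith [sq_nonneg (η - ‖z‖)]
    have hns : 0 < Complex.normSq ((t:ℂ) - z) := Complex.normSq_pos.mpr (hne t ht0)
    exact div_le_div_of_nonneg_left (le_of_lt hd) hns h2
  -- integral lower bound
  have hIcc_ne : μ (Set.Icc (0:ℝ) η) ≠ ⊤ := measure_ne_top μ _
  have step1 : d / (2 * K) * (μ (Set.Icc (0:ℝ) η)).toReal ≤ ∫ t in Set.Icc (0:ℝ) η, g t ∂μ :=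
    setIntegral_ge_of_const_le_real measurableSet_Icc hIcc_ne hgIcc hgint.integrableOn
  have step2 : ∫ t in Set.Icc (0:ℝ) η, g t ∂μ ≤ ∫ t, g t ∂μ :=
    setIntegral_le_integral hgint hg0
  have hmtoReal : m ≤ (μ (Set.Icc (0:ℝ) η)).toReal :=
    (ENNReal.ofReal_le_iff_le_toReal hIcc_ne).mp hmass
  have step3 : ∫ t, g t ∂μ = ((starRingEnd ℂ) w * ∫ t : ℝ, ((t:ℂ) - z)⁻¹ ∂μ).re := by
    rw [hg, ← integral_const_mul]
    exact integral_re (hFint.const_mul _)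
  have step4 : ((starRingEnd ℂ) w * ∫ t : ℝ, ((t:ℂ) - z)⁻¹ ∂μ).re ≤
      ‖∫ t : ℝ, ((t:ℂ) - z)⁻¹ ∂μ‖ := by
    refine (Complex.re_le_norm _).trans (le_of_eq ?_)
    rw [norm_mul, Complex.norm_conj, hw1, one_mul]
  have hfinal : d / (2 * K) * m ≤ ‖∫ t : ℝ, ((t:ℂ) - z)⁻¹ ∂μ‖ := by
    have h5 : d / (2 * K) * m ≤ d / (2 * K) * (μ (Set.Icc (0:ℝ) η)).toReal := by
      apply mul_le_mul_of_nonneg_left hmtoReal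
      positivity
    have step5 : ∫ t, g t ∂μ ≤ ‖∫ t : ℝ, ((t:ℂ) - z)⁻¹ ∂μ‖ :=
      le_of_eq_of_le step3 step4
    linarith
  refine le_trans ?_ hfinal
  rw [div_le_iff₀ (by positivity), div_mul_eq_mul_div, div_mul_eq_mul_div, le_div_iff₀ (by positivity)]
  nlinarith [mul_nonneg (mul_nonneg hd.le hm.le) hK0.le]
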